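/- arXiv:2007.08845 — 3 statements merged into one kernel-verified Lean document; each statement's English description precedes it below -/
import Mathlib

section
/- Let (X,τ) be a Hausdorff space. Suppose there exist a dense subset Q of (X,τ) and an asymmetric binary relation R on X such that (X,τ) is R-bidirected along Q. Then (X,τ) is not a continuous open image of the Sorgenfrey line; that is, there is no surjection from the Sorgenfrey line onto X that is continuous and an open map. -/
open Set Filter Topology TopologicalSpace Function

noncomputable section

/-- The Sorgenfrey topology on `ℝ`: generated by half-open intervals `[a, b)`. -/
def sorgenfreyTop : TopologicalSpace ℝ :=
  TopologicalSpace.generateFrom {s : Set ℝ | ∃ a b : ℝ, s = Set.Ico a b}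

/-- The initial segment `p↾n` of an infinite sequence, as a list. -/
def restr (p : ℕ → ℕ) (n : ℕ) : List ℕ := (List.range n).map p

/-- `fruit V p = ⋂ n, V (p↾n)`. -/
def fruit {X : Type*} (V : List ℕ → Set X) (p : ℕ → ℕ) : Set X := ⋂ n, V (restr p n)

/-- A Souslin scheme is covering if `V ⟨⟩ = X` and `V a = ⋃ n, V (a ⌢ n)`. -/
def Covering {X : Type*} (V : List ℕ → Set X) : Prop :=
  V [] = Set.univ ∧ ∀ a : List ℕ, V a = ⋃ n : ℕ, V (a ++ [n])

/-- A Souslin scheme is complete if every fruit is nonempty. -/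
def CompleteScheme {X : Type*} (V : List ℕ → Set X) : Prop :=
  ∀ q : ℕ → ℕ, (fruit V q).Nonempty

/-- A Souslin scheme has strict branches if every fruit is a singleton. -/
def StrictBranches {X : Type*} (V : List ℕ → Set X) : Prop :=
  ∀ q : ℕ → ℕ, ∃ x : X, fruit V q = {x}

/-- A Souslin scheme is locally strict. -/
def LocallyStrict {X : Type*} (V : List ℕ → Set X) : Prop :=
  (∀ a : List ℕ, V a = ⋃ n : ℕ, V (a ++ [n])) ∧
  ∀ a : List ℕ, ∀ m k : ℕ, m ≠ k → V (a ++ [m]) ∩ V (a ++ [k]) = ∅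

/-- `q ◁ p` for infinite sequences: `q↾n = p↾n` and `q n < p n` for some `n`. -/
def tri (q p : ℕ → ℕ) : Prop := ∃ n : ℕ, restr q n = restr p n ∧ q n < p n

/-- `q ⊴ p` for infinite sequences. -/
def trieq (q p : ℕ → ℕ) : Prop := tri q p ∨ q = p

/-- `q ◁ s` where `q` is an infinite sequence and `s` a finite one. -/
def triL (q : ℕ → ℕ) (s : List ℕ) : Prop :=
  ∃ n : ℕ, ∃ h : n < s.length, restr q n = s.take n ∧ q n < s.get ⟨n, h⟩

/-- `rsequences(q, n) = {p | q ◁ p ∧ q↾n = p↾n}`. -/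
def rsequences (q : ℕ → ℕ) (n : ℕ) : Set (ℕ → ℕ) :=
  {p | tri q p ∧ restr q n = restr p n}

/-- `rsubtree(q, n)`: finite sequences `s` such that `q↾n ⊏ s` and `q ◁ s`. -/
def rsubtree (q : ℕ → ℕ) (n : ℕ) : Set (List ℕ) :=
  {s | restr q n <+: s ∧ restr q n ≠ s ∧ triL q s}

/-- `cut(V, q, n) = ⋃ {fruit(V, p) : p ∈ rsequences(q, n)}`. -/
def cut {X : Type*} (V : List ℕ → Set X) (q : ℕ → ℕ) (n : ℕ) : Set X :=
  ⋃ p ∈ rsequences q n, fruit V p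

/-- `branches(V, x) = {q | x ∈ fruit(V, q)}`. -/
def branches {X : Type*} (V : List ℕ → Set X) (x : X) : Set (ℕ → ℕ) :=
  {q | x ∈ fruit V q}

/-- `q` is a `τ`-base branch of `x` in `V`: `q ∈ branches(V, x)` and
`{cut(V, q, m) ∪ {x} : m ∈ ℕ}` is a neighborhood base of open sets at `x`. -/
def IsBaseBranch {X : Type*} (τ : TopologicalSpace X) (V : List ℕ → Set X)
    (q : ℕ → ℕ) (x : X) : Prop :=
  x ∈ fruit V q ∧ (∀ m : ℕ, IsOpen[τ] (cut V q m ∪ {x})) ∧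
    (@nhds X τ x).HasBasis (fun _ : ℕ => True) (fun m : ℕ => cut V q m ∪ {x})

/-- `BB(V, x, τ)`: the set of `τ`-base branches of `x` in `V`. -/
def BB {X : Type*} (τ : TopologicalSpace X) (V : List ℕ → Set X) (x : X) : Set (ℕ → ℕ) :=
  {q | IsBaseBranch τ V q x}

/-- A Sorgenfrey base for a space: an open complete covering Souslin scheme
satisfying (S1) and (S2). -/
def IsSorgenfreyBase {X : Type*} (τ : TopologicalSpace X) (V : List ℕ → Set X) : Prop :=
  (∀ a : List ℕ, IsOpen[τ] (V a)) ∧ CompleteScheme V ∧ Covering V ∧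
  (∀ x : X, ∀ q ∈ branches V x, ∀ n : ℕ, ∃ t ∈ BB τ V x, restr t n = restr q n) ∧
  (∀ q : ℕ → ℕ, ∃ z : X, q ∈ BB τ V z)

/-- The Souslin scheme `S` on the Baire set: `S a = {p | a ⊑ p}`. -/
def SchemeS (a : List ℕ) : Set (ℕ → ℕ) := {p | restr p a.length = a}

/-- The topology `σ_𝕊` on `ℕ → ℕ` generated by the base
`{cut(S, p, n) ∪ {p} : p ∈ ℕ → ℕ, n ∈ ℕ}`. -/
def sigmaS : TopologicalSpace (ℕ → ℕ) :=
  TopologicalSpace.generateFrom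
    {U : Set (ℕ → ℕ) | ∃ p : ℕ → ℕ, ∃ n : ℕ, U = cut SchemeS p n ∪ {p}}

/-- An open neighborhood `U` of `x` is `R`-right along `Q`. -/
def RightNbhd {X : Type*} (τ : TopologicalSpace X) (Q : Set X) (R : X → X → Prop)
    (x : X) (U : Set X) : Prop :=
  IsOpen[τ] U ∧ x ∈ U ∧ ∀ y ∈ (U \ {x}) ∩ Q, R x y

/-- An open neighborhood `U` of `x` is `R`-left along `Q`. -/
def LeftNbhd {X : Type*} (τ : TopologicalSpace X) (Q : Set X) (R : X → X → Prop)
    (x : X) (U : Set X) : Prop :=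
  IsOpen[τ] U ∧ x ∈ U ∧ ∀ y ∈ (U \ {x}) ∩ Q, R y x

/-- The point `x` looks to the `R`-right along `Q`. -/
def LooksRight {X : Type*} (τ : TopologicalSpace X) (Q : Set X) (R : X → X → Prop)
    (x : X) : Prop :=
  (∃ U : Set X, RightNbhd τ Q R x U) ∧
  ∀ U : Set X, IsOpen[τ] U → x ∈ U →
    ∃ y ∈ (U \ {x}) ∩ Q, {z | R z y} ∈ @nhds X τ x

/-- The point `x` looks to the `R`-left along `Q`. -/
def LooksLeft {X : Type*} (τ : TopologicalSpace X) (Q : Set X) (R : X → X → Prop)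
    (x : X) : Prop :=
  (∃ U : Set X, LeftNbhd τ Q R x U) ∧
  ∀ U : Set X, IsOpen[τ] U → x ∈ U →
    ∃ y ∈ (U \ {x}) ∩ Q, {z | R y z} ∈ @nhds X τ x

/-- `(X, τ)` is `R`-bidirected along `Q`. -/
def Bidirected {X : Type*} (τ : TopologicalSpace X) (Q : Set X) (R : X → X → Prop) : Prop :=
  ∃ Al Ar : Set X, @Dense X τ Al ∧ @Dense X τ Ar ∧ Al ∪ Ar = Set.univ ∧ Al ∩ Ar = ∅ ∧
    (∀ x ∈ Ar, LooksRight τ Q R x) ∧ (∀ x ∈ Al, LooksLeft τ Q R x)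

/-! Let `f` be a continuous open map from the Sorgenfrey line. Call `u` `δ`-right-looking if
`R (f u) (f t)` for every `t ∈ [u, u + δ)` with `f t ∈ Q \ {f u}`. Every `u` is
`1/(n+1)`-right-looking for `R` or for `flip R`, since the `R`-right (or `R`-left)
neighbourhood of `f u` pulls back to a Sorgenfrey neighbourhood of `u`. But the
`δ`-right-looking points are nowhere dense for the euclidean topology: if their closure
contained an interval, pick `r` there with `f r` looking `R`-left, and a witness `f s`,
`s ∈ [r, r + δ)`, with `{z | R (f s) z}` a neighbourhood of `f r`. A `δ`-right-looking `u` just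
to the right of `r` then gives both `R (f s) (f u)` and, as `s ∈ [u, u + δ)`, `R (f u) (f s)`.
So `ℝ` would be meagre, contradicting Baire's theorem. -/

lemma sorgenfrey_nhds (r : ℝ) : @nhds ℝ sorgenfreyTop r = 𝓝[≥] r := by
  rw [sorgenfreyTop, nhds_generateFrom]
  apply le_antisymm
  · intro s hs
    obtain ⟨u, hu, hsub⟩ := mem_nhdsGE_iff_exists_Ico_subset.mp hs
    have hIco : Ico r u ∈ ⨅ s ∈ {s | r ∈ s ∧ ∃ a b : ℝ, s = Ico a b}, 𝓟 s :=
      mem_iInf_of_mem _ (mem_iInf_of_mem ⟨⟨le_rfl, hu⟩, r, u, rfl⟩ (mem_principal_self _))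
    exact mem_of_superset hIco hsub
  · refine le_iInf₂ ?_
    rintro _ ⟨hr, a, b, rfl⟩
    exact le_principal_iff.mpr (Ico_mem_nhdsGE_of_mem hr)

lemma sorgenfrey_isOpen_Ico (a b : ℝ) : IsOpen[sorgenfreyTop] (Ico a b) :=
  TopologicalSpace.GenerateOpen.basic _ ⟨a, b, rfl⟩

lemma IsOpen.sorgenfrey {U : Set ℝ} (hU : IsOpen U) : IsOpen[sorgenfreyTop] U := by
  refine (@isOpen_iff_mem_nhds ℝ sorgenfreyTop U).mpr fun r hr => ?_
  rw [sorgenfrey_nhds]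
  exact nhdsWithin_le_nhds (hU.mem_nhds hr)

section

variable {X : Type*} [τ : TopologicalSpace X] {f : ℝ → X} {Q : Set X} {R : X → X → Prop}

lemma tendsto_nhdsGE_of_sorgenfrey_continuous (hc : Continuous[sorgenfreyTop, τ] f) (r : ℝ) :
    Tendsto f (𝓝[≥] r) (𝓝 (f r)) :=
  sorgenfrey_nhds r ▸ @Continuous.tendsto ℝ X sorgenfreyTop τ f hc r

def tailRightSet (f : ℝ → X) (Q : Set X) (R : X → X → Prop) (δ : ℝ) : Set ℝ :=
  {u | ∀ t ∈ Ico u (u + δ), f t ∈ Q → f t ≠ f u → R (f u) (f t)}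

lemma exists_mem_tailRightSet (hc : Continuous[sorgenfreyTop, τ] f) {u : ℝ} {U : Set X}
    (hU : RightNbhd τ Q R (f u) U) : ∃ n : ℕ, u ∈ tailRightSet f Q R (1 / (n + 1)) := by
  obtain ⟨hUo, hfu, hUR⟩ := hU
  obtain ⟨v, hv, hsub⟩ := mem_nhdsGE_iff_exists_Ico_subset.mp
    (tendsto_nhdsGE_of_sorgenfrey_continuous hc u (hUo.mem_nhds hfu))
  obtain ⟨n, hn⟩ := exists_nat_one_div_lt (sub_pos.mpr hv : (0 : ℝ) < v - u)
  refine ⟨n, fun t ht htQ htu => hUR (f t) ⟨⟨hsub ⟨ht.1, ?_⟩, htu⟩, htQ⟩⟩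
  linarith [ht.2]

lemma not_looksLeft_of_Ioo_subset_closure (hR : ∀ x y : X, R x y → ¬ R y x)
    (hc : Continuous[sorgenfreyTop, τ] f) (ho : @IsOpenMap ℝ X sorgenfreyTop τ f) {r c δ : ℝ}
    (hrc : r < c) (hcδ : c ≤ r + δ)
    (hsub : Ioo r c ⊆ closure (tailRightSet f Q R δ)) : ¬ LooksLeft τ Q R (f r) := by
  rintro ⟨-, hleft⟩
  obtain ⟨_, ⟨⟨⟨s, hs, rfl⟩, -⟩, hsQ⟩, hnhds⟩ :=
    hleft _ (ho _ (sorgenfrey_isOpen_Ico r c)) ⟨r, ⟨le_rfl, hrc⟩, rfl⟩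
  obtain ⟨η, hη, hηsub⟩ :=
    mem_nhdsGE_iff_exists_Ico_subset.mp (tendsto_nhdsGE_of_sorgenfrey_continuous hc r hnhds)
  have hηs : η ≤ s := by
    by_contra! hsη
    exact hR _ _ (hηsub ⟨hs.1, hsη⟩) (hηsub ⟨hs.1, hsη⟩)
  obtain ⟨u, hu, hur, huη⟩ : (tailRightSet f Q R δ ∩ Ioo r (min η c)).Nonempty := by
    obtain ⟨x, hx⟩ := nonempty_Ioo.mpr (lt_min hη hrc)
    exact (closure_inter_open_nonempty_iff isOpen_Ioo).mp
      ⟨x, hsub ⟨hx.1, hx.2.trans_le (min_le_right _ _)⟩, hx⟩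
  replace huη : u < η := huη.trans_le (min_le_left _ _)
  have hsu : R (f s) (f u) := hηsub ⟨hur.le, huη⟩
  have hne : f s ≠ f u := fun e => hR _ _ hsu (e ▸ hsu)
  exact hR _ _ hsu (hu s ⟨by linarith, by linarith [hs.2]⟩ hsQ hne)

lemma isNowhereDense_tailRightSet (hR : ∀ x y : X, R x y → ¬ R y x)
    (hc : Continuous[sorgenfreyTop, τ] f) (ho : @IsOpenMap ℝ X sorgenfreyTop τ f) {B : Set X}
    (hB : Dense B) (hBleft : ∀ x ∈ B, LooksLeft τ Q R x) {δ : ℝ} (hδ : 0 < δ) :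
    IsNowhereDense (tailRightSet f Q R δ) := by
  rw [IsNowhereDense, ← not_nonempty_iff_eq_empty]
  intro hW
  obtain ⟨_, hrB, r, hrW, rfl⟩ :=
    hB.exists_mem_open (ho _ isOpen_interior.sorgenfrey) (hW.image f)
  obtain ⟨c, hrc, hcW⟩ := exists_Ico_subset_of_mem_nhds (isOpen_interior.mem_nhds hrW)
    ⟨r + δ, by linarith⟩
  refine not_looksLeft_of_Ioo_subset_closure hR hc ho (lt_min hrc (by linarith : r < r + δ))
    (min_le_right _ _) ?_ (hBleft _ hrB)
  exact Ioo_subset_Ico_self.trans <|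
    (Ico_subset_Ico_right (min_le_left _ _)).trans (hcW.trans interior_subset)

end

theorem stmt14_general {X : Type*} (τ : TopologicalSpace X)
    (Q : Set X) (R : X → X → Prop)
    (hR : ∀ x y : X, R x y → ¬ R y x) (h : Bidirected τ Q R) :
    ¬ ∃ f : ℝ → X, @Continuous ℝ X sorgenfreyTop τ f ∧
      @IsOpenMap ℝ X sorgenfreyTop τ f ∧ Function.Surjective f := by
  rintro ⟨f, hc, ho, -⟩
  obtain ⟨Al, Ar, hAl, hAr, hcover, -, hright, hleft⟩ := h
  -- `LeftNbhd τ Q R` and `LooksRight τ Q R` are `RightNbhd τ Q (flip R)` and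
  -- `LooksLeft τ Q (flip R)` by unfolding.
  have hunion : univ ⊆ ⋃ n : ℕ,
      tailRightSet f Q R (1 / (n + 1)) ∪ tailRightSet f Q (flip R) (1 / (n + 1)) := by
    intro u _
    rcases hcover.symm.subset (mem_univ (f u)) with hu | hu
    · obtain ⟨U, hU⟩ := (hleft _ hu).1
      obtain ⟨n, hn⟩ := exists_mem_tailRightSet (R := flip R) hc hU
      exact mem_iUnion.mpr ⟨n, Or.inr hn⟩
    · obtain ⟨U, hU⟩ := (hright _ hu).1
      obtain ⟨n, hn⟩ := exists_mem_tailRightSet hc hU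
      exact mem_iUnion.mpr ⟨n, Or.inl hn⟩
  refine not_isMeagre_of_isOpen isOpen_univ univ_nonempty <| IsMeagre.mono hunion <|
    isMeagre_iUnion fun n => IsMeagre.union ?_ ?_
  · exact (isNowhereDense_tailRightSet hR hc ho hAl hleft n.one_div_pos_of_nat).isMeagre
  · exact (isNowhereDense_tailRightSet (fun x y hxy hyx => hR x y hyx hxy) hc ho hAr hright
      n.one_div_pos_of_nat).isMeagre

/-- If a Hausdorff space is `R`-bidirected along a dense subset `Q` for some
asymmetric relation `R`, then it is not a continuous open image of the
Sorgenfrey line. -/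
theorem stmt14 {X : Type*} (τ : TopologicalSpace X) (hT2 : @T2Space X τ)
    (Q : Set X) (hQ : @Dense X τ Q) (R : X → X → Prop)
    (hR : ∀ x y : X, R x y → ¬ R y x) (h : Bidirected τ Q R) :
    ¬ ∃ f : ℝ → X, @Continuous ℝ X sorgenfreyTop τ f ∧
      @IsOpenMap ℝ X sorgenfreyTop τ f ∧ Function.Surjective f :=
  stmt14_general τ Q R hR h
end
end

section
/- Let X be a topological space that is a continuous open image of the Sorgenfrey line (i.e., there is a continuous open surjection from the Sorgenfrey line onto X), and let F be a nonempty closed subset of X such that the subspace F has no isolated points. Then the subspace F is a continuous open image of the Sorgenfrey line. -/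
open Set Filter Topology TopologicalSpace Function

noncomputable section

/-!
The preimage `C = f ⁻¹' F` is a Sorgenfrey-closed set in which no point is isolated from the
right, and `f` restricts to a continuous open surjection `C → F`; so it suffices to map `𝕊` onto
`C`. Each piece `C ∩ [a, ∞)` is order-isomorphic to `[0, 1)`: a countable right-dense subset is
order-isomorphic to `ℚ ∩ (0, 1)`, and since a Sorgenfrey-closed set contains the infima of its
bounded subsets, this isomorphism extends to the whole piece by infima from the right. On sets
without right-isolated points the Sorgenfrey topology is determined by the order, so these
isomorphisms are homeomorphisms onto open subsets of `C`; gluing them along `𝕊 ≅ ℤ × [0, 1)`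
gives the required map.
-/

/-- `RightDense A A` says that no point of `A` is isolated from the right. -/
def RightDense (Q D : Set ℝ) : Prop :=
  ∀ a ∈ D, ∀ b, a < b → (Q ∩ Ioo a b).Nonempty

def IsSorgenfreyImage {Y : Type*} (t : TopologicalSpace Y) : Prop :=
  ∃ g : ℝ → Y, Continuous[sorgenfreyTop, t] g ∧ @IsOpenMap ℝ Y sorgenfreyTop t g ∧ Surjective g

theorem RightDense.inter_Ici {A : Set ℝ} (hA : RightDense A A) (r : ℝ) :
    RightDense (A ∩ Ici r) (A ∩ Ici r) := by
  intro a ha b hab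
  obtain ⟨c, hcA, hc⟩ := hA a ha.1 b hab
  exact ⟨c, ⟨hcA, ha.2.trans hc.1.le⟩, hc⟩

theorem rightDense_Ico (a b : ℝ) : RightDense (Ico a b) (Ico a b) := by
  intro x hx y hxy
  refine ⟨(x + min y b) / 2, ⟨?_, ?_⟩, ?_, ?_⟩ <;>
    linarith [hx.1, hx.2, min_le_left y b, min_le_right y b, lt_min hxy hx.2]

def intProdIcoEquiv : ℤ × Ico (0 : ℝ) 1 ≃ ℝ where
  toFun p := p.1 + p.2
  invFun x := (⌊x⌋, ⟨Int.fract x, Int.fract_nonneg x, Int.fract_lt_one x⟩)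
  left_inv := by
    rintro ⟨n, t, ht⟩
    ext <;> simp [Int.floor_intCast_add, Int.fract_intCast_add, Int.floor_eq_zero_iff.2 ht,
      Int.fract_eq_self.2 ht]
  right_inv x := Int.floor_add_fract x

namespace Sorgenfrey

theorem isOpen_iff {s : Set ℝ} :
    IsOpen[sorgenfreyTop] s ↔ ∀ x ∈ s, ∃ b, x < b ∧ Ico x b ⊆ s := by
  refine ⟨fun hs => ?_, fun h => ?_⟩
  · induction hs with
    | basic u hu =>
      obtain ⟨a, b, rfl⟩ := hu
      exact fun x hx => ⟨b, hx.2, Ico_subset_Ico_left hx.1⟩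
    | univ => exact fun x _ => ⟨x + 1, lt_add_one x, subset_univ _⟩
    | inter u v _ _ hu hv =>
      intro x hx
      obtain ⟨b, hxb, hb⟩ := hu x hx.1
      obtain ⟨c, hxc, hc⟩ := hv x hx.2
      exact ⟨min b c, lt_min hxb hxc, subset_inter
        ((Ico_subset_Ico_right (min_le_left b c)).trans hb)
        ((Ico_subset_Ico_right (min_le_right b c)).trans hc)⟩
    | sUnion S _ hS =>
      rintro x ⟨u, hu, hx⟩
      obtain ⟨b, hxb, hb⟩ := hS u hu x hx
      exact ⟨b, hxb, hb.trans (subset_sUnion_of_mem hu)⟩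
  · choose! b hxb hb using h
    have hs : s = ⋃ x ∈ s, Ico x (b x) :=
      Subset.antisymm (fun x hx => mem_biUnion hx ⟨le_rfl, hxb x hx⟩) (iUnion₂_subset hb)
    rw [hs]
    exact @isOpen_biUnion _ _ sorgenfreyTop _ _ fun x _ =>
      isOpen_generateFrom_of_mem ⟨x, b x, rfl⟩

theorem isOpen_Ico (a b : ℝ) : IsOpen[sorgenfreyTop] (Ico a b) :=
  isOpen_generateFrom_of_mem ⟨a, b, rfl⟩

theorem isClosed_Ici (a : ℝ) : IsClosed[sorgenfreyTop] (Ici a) := by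
  let := sorgenfreyTop
  rw [← isOpen_compl_iff, compl_Ici]
  exact isOpen_iff.2 fun x hx => ⟨a, hx, Ico_subset_Iio_self⟩

theorem csInf_mem {C s : Set ℝ} (hC : IsClosed[sorgenfreyTop] C) (hsC : s ⊆ C)
    (hne : s.Nonempty) (hbdd : BddBelow s) : sInf s ∈ C := by
  by_contra hs
  obtain ⟨b, hb, hbC⟩ := isOpen_iff.1 (@IsClosed.isOpen_compl _ sorgenfreyTop _ hC) _ hs
  obtain ⟨a, has, hab⟩ := exists_lt_of_csInf_lt hne hb
  exact hbC ⟨csInf_le hbdd has, hab⟩ (hsC has)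

theorem continuous_const_add (a : ℝ) : Continuous[sorgenfreyTop, sorgenfreyTop] (a + ·) := by
  refine continuous_generateFrom_iff.2 ?_
  rintro _ ⟨b, c, rfl⟩
  rw [preimage_const_add_Ico]
  exact isOpen_Ico _ _

theorem isOpenMap_const_add (a : ℝ) : @IsOpenMap ℝ ℝ sorgenfreyTop sorgenfreyTop (a + ·) := by
  intro U hU
  rw [image_add_left]
  exact @Continuous.isOpen_preimage _ _ sorgenfreyTop sorgenfreyTop _
    (continuous_const_add (-a)) U hU

theorem isOpen_subtype_of_Ico_subset {A : Set ℝ} {V : Set A}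
    (h : ∀ x ∈ V, ∃ b, x < b ∧ Ico x b ⊆ V) : IsOpen[induced (↑) sorgenfreyTop] V := by
  let := sorgenfreyTop
  choose! b hxb hb using h
  refine isOpen_induced_iff.2 ⟨⋃ x ∈ V, Ico (x : ℝ) (b x), ?_, ?_⟩
  · exact isOpen_biUnion fun x _ => isOpen_Ico _ _
  · refine Subset.antisymm ?_ fun x hx => mem_biUnion hx ⟨le_rfl, hxb x hx⟩
    rintro y ⟨_, ⟨x, rfl⟩, _, ⟨hx, rfl⟩, hy⟩
    exact hb x hx hy

theorem exists_Ico_subset_of_isOpen {A : Set ℝ} (hA : RightDense A A) {V : Set A}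
    (hV : IsOpen[induced (↑) sorgenfreyTop] V) {x : A} (hx : x ∈ V) :
    ∃ b, x < b ∧ Ico x b ⊆ V := by
  let := sorgenfreyTop
  obtain ⟨U, hU, rfl⟩ := isOpen_induced_iff.1 hV
  obtain ⟨b, hxb, hb⟩ := isOpen_iff.1 hU x hx
  obtain ⟨c, hcA, hc⟩ := hA x x.2 b hxb
  exact ⟨⟨c, hcA⟩, hc.1, fun y hy => hb ⟨hy.1, (show (y : ℝ) < c from hy.2).trans hc.2⟩⟩

theorem rightDense_of_not_isOpen_singleton {A : Set ℝ}
    (h : ∀ x : A, ¬IsOpen[induced (↑) sorgenfreyTop] {x}) : RightDense A A := by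
  let := sorgenfreyTop
  intro a ha b hab
  by_contra hne
  refine h ⟨a, ha⟩ (isOpen_induced_iff.2 ⟨Ico a b, isOpen_Ico a b, ?_⟩)
  ext ⟨y, hy⟩
  simp only [mem_preimage, mem_Ico, mem_singleton_iff, Subtype.mk.injEq]
  refine ⟨fun hy' => ?_, fun hya => ⟨hya.ge, hya ▸ hab⟩⟩
  by_contra hya
  exact hne ⟨y, hy, lt_of_le_of_ne hy'.1 (Ne.symm hya), hy'.2⟩

section StrictMono

variable {A C : Set ℝ} {φ : A → C}

theorem continuous_of_strictMono (hC : RightDense C C) (hφ : StrictMono φ)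
    (hup : IsUpperSet (range φ)) :
    Continuous[induced (↑) sorgenfreyTop, induced (↑) sorgenfreyTop] φ := by
  let := sorgenfreyTop
  refine ⟨fun U hU => isOpen_subtype_of_Ico_subset fun x hx => ?_⟩
  obtain ⟨b, hxb, hb⟩ := exists_Ico_subset_of_isOpen hC hU hx
  obtain ⟨c, hcC, hc⟩ := hC _ (φ x).2 b hxb
  obtain ⟨x', hx'⟩ := hup (show φ x ≤ ⟨c, hcC⟩ from hc.1.le) ⟨x, rfl⟩
  have hφx' : φ x < φ x' := hx' ▸ hc.1
  refine ⟨x', hφ.lt_iff_lt.1 hφx', fun y hy => hb ⟨hφ.monotone hy.1, ?_⟩⟩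
  exact (hφ hy.2).trans (hx' ▸ hc.2 : φ x' < b)

theorem isOpenMap_of_strictMono (hA : RightDense A A) (hφ : StrictMono φ)
    (hup : IsUpperSet (range φ)) :
    @IsOpenMap A C (induced (↑) sorgenfreyTop) (induced (↑) sorgenfreyTop) φ := by
  intro V hV
  refine isOpen_subtype_of_Ico_subset ?_
  rintro _ ⟨x, hx, rfl⟩
  obtain ⟨b, hxb, hb⟩ := exists_Ico_subset_of_isOpen hA hV hx
  refine ⟨φ b, hφ hxb, fun z hz => ?_⟩
  obtain ⟨y, rfl⟩ := hup hz.1 ⟨x, rfl⟩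
  exact ⟨y, hb ⟨hφ.le_iff_le.1 hz.1, hφ.lt_iff_lt.1 hz.2⟩, rfl⟩

end StrictMono

theorem isSorgenfreyImage_of_int {Y : Type*} {tY : TopologicalSpace Y} (Φ : ℤ → Ico (0 : ℝ) 1 → Y)
    (hc : ∀ n, Continuous[induced (↑) sorgenfreyTop, tY] (Φ n))
    (ho : ∀ n, @IsOpenMap _ Y (induced (↑) sorgenfreyTop) tY (Φ n))
    (hs : ∀ y, ∃ n s, Φ n s = y) : IsSorgenfreyImage tY := by
  let := sorgenfreyTop
  have he : Continuous intProdIcoEquiv := continuous_prod_of_discrete_left.2 fun n =>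
    (continuous_const_add n).comp continuous_subtype_val
  have he' : IsOpenMap intProdIcoEquiv := isOpenMap_prod_of_discrete_left.2 fun n =>
    (isOpenMap_const_add n).comp (isOpen_Ico 0 1).isOpenMap_subtype_val
  refine ⟨uncurry Φ ∘ intProdIcoEquiv.symm,
    (continuous_prod_of_discrete_left.2 hc).comp (intProdIcoEquiv.continuous_symm_iff.2 he'),
    (isOpenMap_prod_of_discrete_left.2 ho).comp (intProdIcoEquiv.isOpenMap_symm_iff.2 he), ?_⟩
  refine Surjective.comp (fun y => ?_) intProdIcoEquiv.symm.surjective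
  obtain ⟨n, s, h⟩ := hs y
  exact ⟨(n, s), h⟩

end Sorgenfrey

theorem exists_countable_rightDense {D : Set ℝ} (hD : RightDense D D) :
    ∃ Q ⊆ D, Q.Countable ∧ RightDense Q D := by
  obtain ⟨s, hsc, hsd⟩ := TopologicalSpace.exists_countable_dense D
  refine ⟨(↑) '' s, Subtype.coe_image_subset D s, hsc.image _, fun a ha b hab => ?_⟩
  obtain ⟨c, hcD, hc⟩ := hD a ha b hab
  obtain ⟨x, hx, hxs⟩ := hsd.inter_open_nonempty (((↑) : D → ℝ) ⁻¹' Ioo a b)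
    (isOpen_Ioo.preimage continuous_subtype_val) ⟨⟨c, hcD⟩, hc⟩
  exact ⟨x, ⟨x, hxs, rfl⟩, hx⟩

theorem exists_strictMono_dense_Ioo (α : Type*) [LinearOrder α] [Countable α] [DenselyOrdered α]
    [NoMinOrder α] [NoMaxOrder α] [Nonempty α] :
    ∃ ψ : α → ℝ, StrictMono ψ ∧ (∀ a, ψ a ∈ Ioo 0 1) ∧
      ∀ t t', 0 ≤ t → t < t' → t' ≤ 1 → ∃ a, ψ a ∈ Ioo t t' := by
  have := nonempty_Ioo_subtype (zero_lt_one' ℚ)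
  obtain ⟨e⟩ := Order.iso_of_countable_dense α (Ioo (0 : ℚ) 1)
  refine ⟨fun a => ((e a : ℚ) : ℝ), Rat.cast_strictMono.comp
    ((Subtype.strictMono_coe _).comp e.strictMono), fun a => ?_, fun t t' ht htt' ht' => ?_⟩
  · obtain ⟨h₀, h₁⟩ := (e a).2
    beta_reduce
    exact ⟨by exact_mod_cast h₀, by exact_mod_cast h₁⟩
  · obtain ⟨r, htr, hrt'⟩ := exists_rat_btwn htt'
    have hr : r ∈ Ioo (0 : ℚ) 1 :=
      ⟨by exact_mod_cast ht.trans_lt htr, by exact_mod_cast hrt'.trans_le ht'⟩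
    exact ⟨e.symm ⟨r, hr⟩, by simpa using And.intro htr hrt'⟩

section InfExtension

def infExtension {Q : Set ℝ} (ψ : Q → ℝ) (c : ℝ) : ℝ :=
  sInf (ψ '' {q | c ≤ (q : ℝ)})

variable {D Q : Set ℝ} {ψ : Q → ℝ}

theorem infExtension_le (hψ : ∀ q, ψ q ∈ Ioo 0 1) {c : ℝ} {q : Q} (hcq : c ≤ q) :
    infExtension ψ c ≤ ψ q :=
  csInf_le ⟨0, by rintro _ ⟨q', -, rfl⟩; exact (hψ q').1.le⟩ ⟨q, hcq, rfl⟩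

theorem le_infExtension {c t : ℝ} {q₀ : Q} (hcq₀ : c ≤ q₀) (h : ∀ q : Q, c ≤ q → t ≤ ψ q) :
    t ≤ infExtension ψ c :=
  le_csInf ⟨_, q₀, hcq₀, rfl⟩ (by rintro _ ⟨q, hq, rfl⟩; exact h q hq)

theorem infExtension_mem_Ico (hQ : RightDense Q D) (hψ : ∀ q, ψ q ∈ Ioo 0 1) {c : ℝ}
    (hc : c ∈ D) : infExtension ψ c ∈ Ico 0 1 := by
  obtain ⟨q, hqQ, hq⟩ := hQ c hc (c + 1) (lt_add_one c)
  exact ⟨le_infExtension (q₀ := ⟨q, hqQ⟩) hq.1.le fun q _ => (hψ q).1.le,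
    (infExtension_le hψ (q := ⟨q, hqQ⟩) hq.1.le).trans_lt (hψ _).2⟩

theorem strictMonoOn_infExtension (hQD : Q ⊆ D) (hQ : RightDense Q D) (hψm : StrictMono ψ)
    (hψ : ∀ q, ψ q ∈ Ioo 0 1) : StrictMonoOn (infExtension ψ) D := by
  intro c hc c' hc' hcc'
  obtain ⟨q₁, hq₁Q, hq₁⟩ := hQ c hc c' hcc'
  obtain ⟨q₂, hq₂Q, hq₂⟩ := hQ q₁ (hQD hq₁Q) c' hq₁.2
  obtain ⟨q₃, hq₃Q, hq₃⟩ := hQ c' hc' (c' + 1) (lt_add_one c')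
  calc infExtension ψ c ≤ ψ ⟨q₁, hq₁Q⟩ := infExtension_le hψ hq₁.1.le
    _ < ψ ⟨q₂, hq₂Q⟩ := hψm hq₂.1
    _ ≤ infExtension ψ c' := le_infExtension (q₀ := ⟨q₃, hq₃Q⟩) hq₃.1.le fun q hq =>
      hψm.monotone (show q₂ ≤ (q : ℝ) from hq₂.2.le.trans hq)

theorem exists_infExtension_eq (hD : IsClosed[sorgenfreyTop] D) (hbdd : BddBelow D)
    (hQD : Q ⊆ D) (hψm : StrictMono ψ) (hψ : ∀ q, ψ q ∈ Ioo 0 1)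
    (hψd : ∀ t t', 0 ≤ t → t < t' → t' ≤ 1 → ∃ q, ψ q ∈ Ioo t t') {t : ℝ} (ht : t ∈ Ico 0 1) :
    ∃ c ∈ D, infExtension ψ c = t := by
  set S : Set ℝ := (↑) '' {q : Q | t < ψ q}
  obtain ⟨q₀, hq₀⟩ := hψd t 1 ht.1 ht.2 le_rfl
  have hSne : S.Nonempty := ⟨q₀, q₀, hq₀.1, rfl⟩
  have hSbdd : BddBelow S := hbdd.mono (image_subset_iff.2 fun q _ => hQD q.2)
  have hcS : ∀ q : Q, t < ψ q → sInf S ≤ q := fun q hq => csInf_le hSbdd ⟨q, hq, rfl⟩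
  have hSc : ∀ q : Q, ψ q < t → (q : ℝ) ≤ sInf S := fun q hq =>
    le_csInf hSne (by rintro _ ⟨s, hs, rfl⟩; exact (hψm.lt_iff_lt.1 (hq.trans hs)).le)
  refine ⟨sInf S, Sorgenfrey.csInf_mem hD (image_subset_iff.2 fun q _ => hQD q.2) hSne hSbdd,
    le_antisymm (le_of_forall_gt_imp_ge_of_dense fun r htr => ?_)
      (le_infExtension (hcS q₀ hq₀.1) fun q hq => not_lt.1 fun hqt => ?_)⟩
  · obtain ⟨q, hq⟩ := hψd t (min r 1) ht.1 (lt_min htr ht.2) (min_le_right r 1)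
    exact (infExtension_le hψ (hcS q hq.1)).trans (hq.2.le.trans (min_le_left r 1))
  · obtain ⟨q', hq'⟩ := hψd (ψ q) t (hψ q).1.le hqt ht.2.le
    exact (hψm.lt_iff_lt.1 hq'.1).not_ge ((hSc q' hq'.2).trans hq)

end InfExtension

theorem nonempty_orderIso_Ico {D : Set ℝ} (hD : IsClosed[sorgenfreyTop] D) (hne : D.Nonempty)
    (hbdd : BddBelow D) (hr : RightDense D D) : Nonempty (D ≃o Ico (0 : ℝ) 1) := by
  have hd : sInf D ∈ D := Sorgenfrey.csInf_mem hD subset_rfl hne hbdd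
  obtain ⟨Q₀, hQ₀D, hQ₀c, hQ₀⟩ := exists_countable_rightDense hr
  set Q := Q₀ ∩ Ioi (sInf D)
  have hQD : Q ⊆ D := inter_subset_left.trans hQ₀D
  have hQ : RightDense Q D := fun a ha b hab =>
    let ⟨q, hq, hq'⟩ := hQ₀ a ha b hab
    ⟨q, ⟨hq, (csInf_le hbdd ha).trans_lt hq'.1⟩, hq'⟩
  have : Countable Q := (hQ₀c.mono inter_subset_left).to_subtype
  have : Nonempty Q :=
    let ⟨q, hq, _⟩ := hQ _ hd _ (lt_add_one _)
    ⟨⟨q, hq⟩⟩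
  have : DenselyOrdered Q := ⟨fun a b hab =>
    let ⟨q, hq, hq'⟩ := hQ a (hQD a.2) b hab
    ⟨⟨q, hq⟩, hq'⟩⟩
  have : NoMaxOrder Q := ⟨fun a =>
    let ⟨q, hq, hq'⟩ := hQ a (hQD a.2) (a + 1) (lt_add_one _)
    ⟨⟨q, hq⟩, hq'.1⟩⟩
  have : NoMinOrder Q := ⟨fun a =>
    let ⟨q, hq, hq'⟩ := hQ _ hd a a.2.2
    ⟨⟨q, hq⟩, hq'.2⟩⟩
  obtain ⟨ψ, hψm, hψ, hψd⟩ := exists_strictMono_dense_Ioo Q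
  refine ⟨StrictMono.orderIsoOfSurjective
    (fun c => ⟨infExtension ψ c.1, infExtension_mem_Ico hQ hψ c.2⟩)
    (fun c c' h => strictMonoOn_infExtension hQD hQ hψm hψ c.2 c'.2 h) fun t => ?_⟩
  obtain ⟨c, hc, hct⟩ := exists_infExtension_eq hD hbdd hQD hψm hψ hψd t.2
  exact ⟨⟨c, hc⟩, Subtype.ext hct⟩

theorem isSorgenfreyImage_of_isClosed {C : Set ℝ} (hC : IsClosed[sorgenfreyTop] C)
    (hne : C.Nonempty) (hiso : ∀ x : C, ¬IsOpen[induced (↑) sorgenfreyTop] {x}) :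
    IsSorgenfreyImage (induced ((↑) : C → ℝ) sorgenfreyTop) := by
  let := sorgenfreyTop
  have hr := Sorgenfrey.rightDense_of_not_isOpen_singleton hiso
  obtain ⟨c₀, hc₀⟩ := hne
  set D : ℤ → Set ℝ := fun n => C ∩ Ici (c₀ - |(n : ℝ)|)
  have e : ∀ n, D n ≃o Ico (0 : ℝ) 1 := fun n => Classical.choice <|
    nonempty_orderIso_Ico (hC.inter (Sorgenfrey.isClosed_Ici _))
      ⟨c₀, hc₀, sub_le_self c₀ (abs_nonneg (n : ℝ))⟩ ⟨_, fun _ h => h.2⟩ (hr.inter_Ici _)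
  set Φ : ℤ → Ico (0 : ℝ) 1 → C := fun n t => ⟨(e n).symm t, ((e n).symm t).2.1⟩
  have hΦ : ∀ n, StrictMono (Φ n) := fun n _ _ h => (e n).symm.strictMono h
  have hup : ∀ n, IsUpperSet (range (Φ n)) := by
    rintro n c c' hcc' ⟨t, rfl⟩
    exact ⟨e n ⟨c', c'.2, ((e n).symm t).2.2.trans (show ((Φ n t : C) : ℝ) ≤ c' from hcc')⟩,
      by simp [Φ]⟩
  refine Sorgenfrey.isSorgenfreyImage_of_int Φ
    (fun n => Sorgenfrey.continuous_of_strictMono hr (hΦ n) (hup n))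
    (fun n => Sorgenfrey.isOpenMap_of_strictMono (rightDense_Ico 0 1) (hΦ n) (hup n)) fun c => ?_
  have hc : (c : ℝ) ∈ D ⌈c₀ - c⌉₊ := by
    refine ⟨c.2, ?_⟩
    simp only [Int.cast_natCast, Nat.abs_cast, mem_Ici, tsub_le_iff_right]
    linarith [Nat.le_ceil (c₀ - c)]
  exact ⟨⌈c₀ - c⌉₊, e _ ⟨c, hc⟩, by simp [Φ]⟩

/-- Being a continuous open image of the Sorgenfrey line is preserved by
nonempty closed subspaces without isolated points. -/
theorem stmt17 {X : Type*} (τ : TopologicalSpace X)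
    (f : ℝ → X) (hc : @Continuous ℝ X sorgenfreyTop τ f)
    (ho : @IsOpenMap ℝ X sorgenfreyTop τ f) (hs : Function.Surjective f)
    (F : Set X) (hF : IsClosed[τ] F) (hne : F.Nonempty)
    (hiso : ∀ x : ↥F, ¬ IsOpen[TopologicalSpace.induced Subtype.val τ] ({x} : Set ↥F)) :
    ∃ g : ℝ → ↥F, @Continuous ℝ ↥F sorgenfreyTop (TopologicalSpace.induced Subtype.val τ) g ∧
      @IsOpenMap ℝ ↥F sorgenfreyTop (TopologicalSpace.induced Subtype.val τ) g ∧
      Function.Surjective g := by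
  let := sorgenfreyTop
  have hfo : IsOpenMap (F.restrictPreimage f) := ho.restrictPreimage F
  obtain ⟨y, hy⟩ := hne
  obtain ⟨x, rfl⟩ := hs y
  obtain ⟨g, hgc, hgo, hgs⟩ := isSorgenfreyImage_of_isClosed (hF.preimage hc) ⟨x, hy⟩
    fun z hz => hiso _ (by simpa using hfo _ hz)
  exact ⟨F.restrictPreimage f ∘ g, hc.restrictPreimage.comp hgc, hfo.comp hgo,
    (hs.restrictPreimage F).comp hgs⟩
end
end

section
/- The double-arrow space is not a continuous open image of the Sorgenfrey line; that is, there is no surjection from the Sorgenfrey line onto the double-arrow space that is continuous and an open map. -/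
open Set Filter Topology TopologicalSpace Function

noncomputable section

/-- The underlying set of the double-arrow space, as a subset of `ℝ ×ₗ Bool`
(with `false` playing the role of `0` and `true` the role of `1`). -/
def DASet : Set (ℝ ×ₗ Bool) :=
  {x | (0 < (ofLex x).1 ∧ (ofLex x).1 ≤ 1 ∧ (ofLex x).2 = false) ∨
       (0 ≤ (ofLex x).1 ∧ (ofLex x).1 < 1 ∧ (ofLex x).2 = true)}

/-- The order topology on the double-arrow space, induced by the lexicographic order. -/
def DATop : TopologicalSpace ↥DASet := Preorder.topology ↥DASet

/-!
Let `f` be a continuous open map from the Sorgenfrey line to a linearly ordered space in which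
every point is isolated from the left or from the right, while the points that are not isolated
from the left, and those that are not isolated from the right, are dense; the double arrow space
is such a space. Every `x` is then a minimum or a maximum of `f` on some `[x, x + 1/(n+1))`, so by
Baire's theorem, say, the minima for a fixed `n` are dense in a short interval `I`, and right
continuity makes `f` monotone on `I`. As `f '' [x, b)` is a neighbourhood of `f x`, every value of
`f` on `I` is then isolated from the left, yet the open set `f '' I` contains a point that is not.
-/

theorem nhds_sorgenfreyTop (x : ℝ) : @nhds ℝ sorgenfreyTop x = 𝓝[≥] x := by
  rw [sorgenfreyTop, TopologicalSpace.nhds_generateFrom]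
  refine le_antisymm (fun s hs => ?_) (le_iInf₂ fun s ⟨hx, a, b, hs⟩ => ?_)
  · obtain ⟨u, hu, hsub⟩ := mem_nhdsGE_iff_exists_Ico_subset.1 hs
    exact mem_iInf_of_mem (Ico x u) (mem_iInf_of_mem ⟨⟨le_rfl, hu⟩, x, u, rfl⟩ hsub)
  · subst hs
    exact le_principal_iff.2 (mem_of_superset (Ico_mem_nhdsGE hx.2) (Ico_subset_Ico_left hx.1))

theorem exists_nat_forall_Ico_of_eventually {p : ℝ → Prop} {x : ℝ}
    (h : ∀ᶠ y in 𝓝[≥] x, p y) : ∃ n : ℕ, ∀ y ∈ Ico x (x + 1 / (n + 1)), p y := by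
  obtain ⟨u, hxu, hu⟩ := (nhdsGE_basis_Ico x).eventually_iff.1 h
  obtain ⟨n, hn⟩ := exists_nat_one_div_lt (sub_pos.2 hxu)
  exact ⟨n, fun y hy => hu ⟨hy.1, by linarith [hy.2]⟩⟩

section

variable {α : Type*} [LinearOrder α] [TopologicalSpace α] {g : ℝ → α}

theorem Ici_mem_nhds_iff_nhdsLT_eq_bot {z : α} : Ici z ∈ 𝓝 z ↔ 𝓝[<] z = ⊥ := by
  rw [nhdsWithin, inf_principal_eq_bot, compl_Iio]

def rightMinSet (g : ℝ → α) (n : ℕ) : Set ℝ :=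
  {x | IsMinOn g (Ico x (x + 1 / (n + 1))) x}

theorem iUnion_rightMinSet_union (hcont : ∀ x, Tendsto g (𝓝[≥] x) (𝓝 (g x)))
    (hsplit : ∀ z : α, 𝓝[<] z = ⊥ ∨ 𝓝[>] z = ⊥) :
    ⋃ n, (rightMinSet g n ∪ rightMinSet (OrderDual.toDual ∘ g) n) = univ := by
  refine eq_univ_of_forall fun x => ?_
  simp only [mem_iUnion, mem_union]
  rcases hsplit (g x) with h | h
  · obtain ⟨n, hn⟩ :=
      exists_nat_forall_Ico_of_eventually (hcont x (Ici_mem_nhds_iff_nhdsLT_eq_bot.2 h))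
    exact ⟨n, Or.inl hn⟩
  · obtain ⟨n, hn⟩ := exists_nat_forall_Ico_of_eventually
      (hcont x (Ici_mem_nhds_iff_nhdsLT_eq_bot (α := αᵒᵈ).2 h))
    exact ⟨n, Or.inr hn⟩

theorem monotoneOn_Ioo_of_isMinOn [OrderTopology α]
    (hcont : ∀ x, Tendsto g (𝓝[≥] x) (𝓝 (g x))) {D : Set ℝ} {a b : ℝ}
    (hD : Ioo a b ⊆ closure D) (hmin : ∀ d ∈ D, d ∈ Ioo a b → IsMinOn g (Ico d b) d) :
    MonotoneOn g (Ioo a b) := by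
  intro x hx y hy hxy
  by_contra! hlt
  obtain ⟨u, v, -, hv, hyu, hxv, huv⟩ := order_separated hlt
  obtain ⟨c, hxc, hc⟩ := mem_nhdsGE_iff_exists_Ico_subset.1 (hcont x (hv.mem_nhds hxv))
  have hxy' : x < y := hxy.lt_of_ne (by rintro rfl; exact hlt.false)
  obtain ⟨m, hm⟩ : (Ioo x (min c y)).Nonempty := nonempty_Ioo.2 (lt_min hxc hxy')
  have hmab : m ∈ Ioo a b := ⟨hx.1.trans hm.1, (hm.2.trans_le (min_le_right _ _)).trans hy.2⟩
  obtain ⟨d, ⟨hxd, hdcy⟩, hdD⟩ := mem_closure_iff.1 (hD hmab) _ isOpen_Ioo hm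
  have hgd : g d ∈ v := hc ⟨hxd.le, hdcy.trans_le (min_le_left _ _)⟩
  have hdy : d < y := hdcy.trans_le (min_le_right _ _)
  exact (huv _ hyu _ hgd).not_ge (hmin d hdD ⟨hx.1.trans hxd, hdy.trans hy.2⟩ ⟨hdy.le, hy.2⟩)

theorem Ici_mem_nhds_of_monotoneOn (hopen : ∀ x, ∀ s ∈ 𝓝[≥] x, g '' s ∈ 𝓝 (g x))
    {a b x : ℝ} (hg : MonotoneOn g (Ioo a b)) (hx : x ∈ Ioo a b) : Ici (g x) ∈ 𝓝 (g x) :=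
  mem_of_superset (hopen x _ (Ico_mem_nhdsGE hx.2)) <| image_subset_iff.2 fun _ hy =>
    hg hx ⟨hx.1.trans_le hy.1, hy.2⟩ hy.1

theorem not_monotoneOn_Ioo (hopen : ∀ x, ∀ s ∈ 𝓝[≥] x, g '' s ∈ 𝓝 (g x))
    (hdense : Dense {z : α | (𝓝[<] z).NeBot}) {a b : ℝ} (hab : a < b) :
    ¬ MonotoneOn g (Ioo a b) := by
  intro hg
  obtain ⟨m, hm⟩ := nonempty_Ioo.2 hab
  have hI : g '' Ico m b ∈ 𝓝 (g m) := hopen m _ (Ico_mem_nhdsGE hm.2)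
  obtain ⟨_, hgy, hyI⟩ := hdense.exists_mem_open isOpen_interior
    ⟨g m, mem_interior_iff_mem_nhds.2 hI⟩
  obtain ⟨y, hy, rfl⟩ := interior_subset hyI
  exact hgy.ne (Ici_mem_nhds_iff_nhdsLT_eq_bot.1
    (Ici_mem_nhds_of_monotoneOn hopen hg ⟨hm.1.trans_le hy.1, hy.2⟩))

theorem isNowhereDense_rightMinSet [OrderTopology α]
    (hcont : ∀ x, Tendsto g (𝓝[≥] x) (𝓝 (g x))) (hopen : ∀ x, ∀ s ∈ 𝓝[≥] x, g '' s ∈ 𝓝 (g x))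
    (hdense : Dense {z : α | (𝓝[<] z).NeBot}) (n : ℕ) : IsNowhereDense (rightMinSet g n) := by
  refine eq_empty_of_forall_notMem fun x hx => ?_
  obtain ⟨r, hr, hball⟩ := Metric.mem_nhds_iff.1 (mem_interior_iff_mem_nhds.1 hx)
  set b := x + min r (1 / (n + 1)) with hb
  have hxb : x < b := lt_add_of_pos_right x (lt_min hr (by positivity))
  have hsub : Ioo x b ⊆ closure (rightMinSet g n) := by
    refine Subset.trans ?_ hball
    rw [Real.ball_eq_Ioo]
    exact Ioo_subset_Ioo (by linarith) (by simp [hb])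
  refine not_monotoneOn_Ioo hopen hdense hxb (monotoneOn_Ioo_of_isMinOn hcont hsub
    fun d hd hdI => hd.on_subset (Ico_subset_Ico_right ?_))
  linarith [hdI.1, min_le_right r (1 / (n + 1))]

theorem not_continuous_and_isOpenMap_sorgenfrey [OrderTopology α]
    (hsplit : ∀ z : α, 𝓝[<] z = ⊥ ∨ 𝓝[>] z = ⊥)
    (hdenseLT : Dense {z : α | (𝓝[<] z).NeBot}) (hdenseGT : Dense {z : α | (𝓝[>] z).NeBot})
    (g : ℝ → α) : ¬ (Continuous[sorgenfreyTop, _] g ∧ @IsOpenMap ℝ α sorgenfreyTop _ g) := by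
  rintro ⟨hc, ho⟩
  have hcont : ∀ x, Tendsto g (𝓝[≥] x) (𝓝 (g x)) := fun x =>
    nhds_sorgenfreyTop x ▸ @Continuous.tendsto _ _ sorgenfreyTop _ g hc x
  have hopen : ∀ x, ∀ s ∈ 𝓝[≥] x, g '' s ∈ 𝓝 (g x) := fun x s hs =>
    @IsOpenMap.image_mem_nhds _ _ _ sorgenfreyTop _ ho x s (nhds_sorgenfreyTop x ▸ hs)
  have hmeagre : IsMeagre (univ : Set ℝ) := by
    rw [← iUnion_rightMinSet_union hcont hsplit]
    exact isMeagre_iUnion fun n =>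
      (isNowhereDense_rightMinSet hcont hopen hdenseLT n).isMeagre.union
        (isNowhereDense_rightMinSet (α := αᵒᵈ) hcont hopen hdenseGT n).isMeagre
  exact not_isMeagre_of_isOpen isOpen_univ univ_nonempty hmeagre

end

namespace DASet

instance : TopologicalSpace DASet := DATop

instance : OrderTopology DASet := ⟨rfl⟩

def lower (t : ℝ) (h₀ : 0 < t) (h₁ : t ≤ 1) : DASet := ⟨toLex (t, false), Or.inl ⟨h₀, h₁, rfl⟩⟩

def upper (t : ℝ) (h₀ : 0 ≤ t) (h₁ : t < 1) : DASet := ⟨toLex (t, true), Or.inr ⟨h₀, h₁, rfl⟩⟩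

section

variable {s t : ℝ} {hs₀ hs₁ ht₀ ht₁}

@[simp] theorem lower_lt_lower : lower s hs₀ hs₁ < lower t ht₀ ht₁ ↔ s < t := by
  simp [lower, ← Subtype.coe_lt_coe, Prod.Lex.toLex_lt_toLex]

@[simp] theorem upper_lt_upper : upper s hs₀ hs₁ < upper t ht₀ ht₁ ↔ s < t := by
  simp [upper, ← Subtype.coe_lt_coe, Prod.Lex.toLex_lt_toLex]

@[simp] theorem lower_lt_upper : lower s hs₀ hs₁ < upper t ht₀ ht₁ ↔ s ≤ t := by
  simp [lower, upper, ← Subtype.coe_lt_coe, Prod.Lex.toLex_lt_toLex, le_iff_lt_or_eq]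

@[simp] theorem upper_lt_lower : upper s hs₀ hs₁ < lower t ht₀ ht₁ ↔ s < t := by
  simp [lower, upper, ← Subtype.coe_lt_coe, Prod.Lex.toLex_lt_toLex]

end

theorem eq_lower_or_eq_upper (z : DASet) :
    (∃ t h₀ h₁, z = lower t h₀ h₁) ∨ ∃ t h₀ h₁, z = upper t h₀ h₁ := by
  obtain ⟨⟨t, b⟩, hz⟩ := z
  rcases hz with ⟨h₀, h₁, hb⟩ | ⟨h₀, h₁, hb⟩
  · obtain rfl : b = false := hb
    exact Or.inl ⟨t, h₀, h₁, rfl⟩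
  · obtain rfl : b = true := hb
    exact Or.inr ⟨t, h₀, h₁, rfl⟩

theorem lower_covBy_upper {t : ℝ} (h₀ : 0 < t) (h₁ : t < 1) :
    lower t h₀ h₁.le ⋖ upper t h₀.le h₁ := by
  refine ⟨lower_lt_upper.2 le_rfl, fun c hc₁ hc₂ => ?_⟩
  rcases eq_lower_or_eq_upper c with ⟨s, hs₀, hs₁, rfl⟩ | ⟨s, hs₀, hs₁, rfl⟩ <;>
    simp only [lower_lt_lower, lower_lt_upper, upper_lt_upper] at hc₁ hc₂ <;> linarith

theorem nhdsLT_eq_bot_or_nhdsGT_eq_bot (z : DASet) : 𝓝[<] z = ⊥ ∨ 𝓝[>] z = ⊥ := by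
  rw [nhdsLT_eq_bot_iff, nhdsGT_eq_bot_iff]
  rcases eq_lower_or_eq_upper z with ⟨t, ht₀, ht₁, rfl⟩ | ⟨t, ht₀, ht₁, rfl⟩
  · refine Or.inr ?_
    rcases ht₁.lt_or_eq with h | rfl
    · exact Or.inr ⟨_, lower_covBy_upper ht₀ h⟩
    · refine Or.inl fun w => not_lt.1 ?_
      rcases eq_lower_or_eq_upper w with ⟨s, hs₀, hs₁, rfl⟩ | ⟨s, hs₀, hs₁, rfl⟩ <;> simp [*]
  · refine Or.inl ?_
    rcases ht₀.eq_or_lt with rfl | h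
    · refine Or.inl fun w => not_lt.1 ?_
      rcases eq_lower_or_eq_upper w with ⟨s, hs₀, hs₁, rfl⟩ | ⟨s, hs₀, hs₁, rfl⟩ <;> simp [*]
    · exact Or.inr ⟨_, lower_covBy_upper h ht₁⟩

theorem nhdsLT_lower_neBot {t : ℝ} (h₀ : 0 < t) (h₁ : t ≤ 1) : (𝓝[<] lower t h₀ h₁).NeBot := by
  rw [neBot_iff, Ne, nhdsLT_eq_bot_iff, not_or, not_exists]
  refine ⟨fun hbot => (hbot (upper 0 le_rfl one_pos)).not_gt (by simpa using h₀), fun b hb => ?_⟩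
  rcases eq_lower_or_eq_upper b with ⟨s, hs₀, hs₁, rfl⟩ | ⟨s, hs₀, hs₁, rfl⟩ <;>
  · have hst : s < t := by simpa using hb.1
    exact hb.2 (c := lower ((s + t) / 2) (by linarith) (by linarith))
      (by simp; linarith) (by simp; linarith)

theorem nhdsGT_upper_neBot {t : ℝ} (h₀ : 0 ≤ t) (h₁ : t < 1) : (𝓝[>] upper t h₀ h₁).NeBot := by
  rw [neBot_iff, Ne, nhdsGT_eq_bot_iff, not_or, not_exists]
  refine ⟨fun htop => (htop (lower 1 one_pos le_rfl)).not_gt (by simpa using h₁), fun b hb => ?_⟩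
  rcases eq_lower_or_eq_upper b with ⟨s, hs₀, hs₁, rfl⟩ | ⟨s, hs₀, hs₁, rfl⟩ <;>
  · have hts : t < s := by simpa using hb.1
    exact hb.2 (c := upper ((t + s) / 2) (by linarith) (by linarith))
      (by simp; linarith) (by simp; linarith)

theorem dense_nhdsLT_neBot : Dense {z : DASet | (𝓝[<] z).NeBot} := by
  refine dense_iff_inter_open.2 fun U hU ⟨z, hz⟩ => ?_
  rcases eq_lower_or_eq_upper z with ⟨t, ht₀, ht₁, rfl⟩ | ⟨t, ht₀, ht₁, rfl⟩
  · exact ⟨_, hz, nhdsLT_lower_neBot ht₀ ht₁⟩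
  obtain ⟨u, hzu, hu⟩ := exists_Ico_subset_of_mem_nhds (hU.mem_nhds hz)
    ⟨lower 1 one_pos le_rfl, by simpa using ht₁⟩
  rcases eq_lower_or_eq_upper u with ⟨s, hs₀, hs₁, rfl⟩ | ⟨s, hs₀, hs₁, rfl⟩ <;>
  · have hts : t < s := by simpa using hzu
    have hm : lower ((t + s) / 2) (by linarith) (by linarith) ∈ U :=
      hu ⟨(upper_lt_lower.2 (by linarith)).le, by simp; linarith⟩
    exact ⟨_, hm, nhdsLT_lower_neBot _ _⟩

theorem dense_nhdsGT_neBot : Dense {z : DASet | (𝓝[>] z).NeBot} := by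
  refine dense_iff_inter_open.2 fun U hU ⟨z, hz⟩ => ?_
  rcases eq_lower_or_eq_upper z with ⟨t, ht₀, ht₁, rfl⟩ | ⟨t, ht₀, ht₁, rfl⟩
  swap
  · exact ⟨_, hz, nhdsGT_upper_neBot ht₀ ht₁⟩
  obtain ⟨u, hzu, hu⟩ := exists_Ioc_subset_of_mem_nhds (hU.mem_nhds hz)
    ⟨upper 0 le_rfl one_pos, by simpa using ht₀⟩
  rcases eq_lower_or_eq_upper u with ⟨s, hs₀, hs₁, rfl⟩ | ⟨s, hs₀, hs₁, rfl⟩ <;>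
  · have hst : s < t := by simpa using hzu
    have hm : upper ((s + t) / 2) (by linarith) (by linarith) ∈ U :=
      hu ⟨by simp; linarith, (upper_lt_lower.2 (by linarith)).le⟩
    exact ⟨_, hm, nhdsGT_upper_neBot _ _⟩

end DASet

/-- The double-arrow space is not a continuous open image of the Sorgenfrey line. -/
theorem stmt19 :
    ¬ ∃ f : ℝ → ↥DASet, @Continuous ℝ ↥DASet sorgenfreyTop DATop f ∧
      @IsOpenMap ℝ ↥DASet sorgenfreyTop DATop f ∧ Function.Surjective f := by
  rintro ⟨f, hcont, hopen, -⟩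
  exact not_continuous_and_isOpenMap_sorgenfrey DASet.nhdsLT_eq_bot_or_nhdsGT_eq_bot
    DASet.dense_nhdsLT_neBot DASet.dense_nhdsGT_neBot f ⟨hcont, hopen⟩
end
end
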